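/- Let (Z_{k+1}, E_{k+1}, λ_{k+1}) be obtained from (Z_k, E_k, λ_k) by one D-LADMM step with parameters (W_k, θ_k, β_k), let ω_{k+1} = (Z_{k+1}, E_{k+1}, −λ_{k+1}), let (Z*, E*, −λ*) = ω* ∈ Ω*, and let F_k(Z,E,−λ) = (W_kᵀλ, λ, AZ+E−X). Then f(Z_{k+1}) + g(E_{k+1}) − f(Z*) − g(E*) + ⟨ω_{k+1} − ω*, F_k(ω_{k+1})⟩ ≥ ⟨λ_{k+1}, (W_k − A)(Z_{k+1} − Z*)⟩. -/

import Mathlib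

open Matrix

noncomputable section

/-- Frobenius inner product `⟨M, N⟩ = trace (Mᵀ N)`. -/
def finner {a b : ℕ} (M N : Matrix (Fin a) (Fin b) ℝ) : ℝ := (Mᵀ * N).trace

/-- Frobenius norm. -/
def fnorm {a b : ℕ} (M : Matrix (Fin a) (Fin b) ℝ) : ℝ := Real.sqrt (finner M M)

/-- Entrywise positivity of a matrix. -/
def EntrywisePos {a b : ℕ} (M : Matrix (Fin a) (Fin b) ℝ) : Prop := ∀ i j, 0 < M i j

/-- Entrywise reciprocal of a matrix. -/
def recip {a b : ℕ} (M : Matrix (Fin a) (Fin b) ℝ) : Matrix (Fin a) (Fin b) ℝ :=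
  Matrix.of fun i j => (M i j)⁻¹

/-- Convex subdifferential w.r.t. the Frobenius inner product. -/
def subdiff {a b : ℕ} (f : Matrix (Fin a) (Fin b) ℝ → ℝ) (x : Matrix (Fin a) (Fin b) ℝ) :
    Set (Matrix (Fin a) (Fin b) ℝ) :=
  {u | ∀ y, f y ≥ f x + finner u (y - x)}

/-- Spectral norm (largest singular value), via the Euclidean operator characterization. -/
def specNorm {a b : ℕ} (M : Matrix (Fin a) (Fin b) ℝ) : ℝ :=
  sSup {r | ∃ x : Fin b → ℝ, (∑ i, x i ^ 2) = 1 ∧ r = Real.sqrt (∑ i, (M.mulVec x i) ^ 2)}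

/-- Triples ω = (Z, E, Λ) (with Λ standing for −λ). -/
abbrev Triple (m d n : ℕ) :=
  Matrix (Fin d) (Fin n) ℝ × Matrix (Fin m) (Fin n) ℝ × Matrix (Fin m) (Fin n) ℝ

/-- Blockwise Frobenius inner product on triples. -/
def tinner {m d n : ℕ} (ω ω' : Triple m d n) : ℝ :=
  finner ω.1 ω'.1 + finner ω.2.1 ω'.2.1 + finner ω.2.2 ω'.2.2

/-- Blockwise Frobenius norm on triples. -/
def tfnorm {m d n : ℕ} (ω : Triple m d n) : ℝ := Real.sqrt (tinner ω ω)

/-- The linear operator `D(Z) = θ∘Z − Wᵀ(β∘(AZ))`. -/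
def Dop {m d n : ℕ} (A W : Matrix (Fin m) (Fin d) ℝ) (θ : Matrix (Fin d) (Fin n) ℝ)
    (β : Matrix (Fin m) (Fin n) ℝ) (Z : Matrix (Fin d) (Fin n) ℝ) : Matrix (Fin d) (Fin n) ℝ :=
  Matrix.hadamard θ Z - Wᵀ * Matrix.hadamard β (A * Z)

/-- The block operator `H(Z,E,Λ) = (D(Z), β∘E, β⁻¹∘Λ)`. -/
def Hop {m d n : ℕ} (A W : Matrix (Fin m) (Fin d) ℝ) (θ : Matrix (Fin d) (Fin n) ℝ)
    (β : Matrix (Fin m) (Fin n) ℝ) (ω : Triple m d n) : Triple m d n :=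
  (Dop A W θ β ω.1, Matrix.hadamard β ω.2.1, Matrix.hadamard (recip β) ω.2.2)

/-- `F(Z,E,−λ) = (Wᵀλ, λ, AZ+E−X)`. -/
def Fop {m d n : ℕ} (A : Matrix (Fin m) (Fin d) ℝ) (X : Matrix (Fin m) (Fin n) ℝ)
    (W : Matrix (Fin m) (Fin d) ℝ) (ω : Triple m d n) : Triple m d n :=
  (Wᵀ * (-ω.2.2), -ω.2.2, A * ω.1 + ω.2.1 - X)

/-- `G(E') = (Wᵀ(β∘E'), β∘E', 0)`. -/
def Gop {m d n : ℕ} (W : Matrix (Fin m) (Fin d) ℝ) (β : Matrix (Fin m) (Fin n) ℝ)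
    (E' : Matrix (Fin m) (Fin n) ℝ) : Triple m d n :=
  (Wᵀ * Matrix.hadamard β E', Matrix.hadamard β E', 0)

/-- The point `R = Z_k − θ⁻¹∘[Wᵀ(λ_k + β∘(AZ_k+E_k−X))]`. -/
def Rmat {m d n : ℕ} (A : Matrix (Fin m) (Fin d) ℝ) (X : Matrix (Fin m) (Fin n) ℝ)
    (W : Matrix (Fin m) (Fin d) ℝ) (θ : Matrix (Fin d) (Fin n) ℝ) (β : Matrix (Fin m) (Fin n) ℝ)
    (Zk : Matrix (Fin d) (Fin n) ℝ) (Ek lk : Matrix (Fin m) (Fin n) ℝ) :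
    Matrix (Fin d) (Fin n) ℝ :=
  Zk - Matrix.hadamard (recip θ) (Wᵀ * (lk + Matrix.hadamard β (A * Zk + Ek - X)))

/-- The point `S = X − AZ_{k+1} − β⁻¹∘λ_k`. -/
def Smat {m d n : ℕ} (A : Matrix (Fin m) (Fin d) ℝ) (X : Matrix (Fin m) (Fin n) ℝ)
    (β : Matrix (Fin m) (Fin n) ℝ) (Zk1 : Matrix (Fin d) (Fin n) ℝ)
    (lk : Matrix (Fin m) (Fin n) ℝ) : Matrix (Fin m) (Fin n) ℝ :=
  X - A * Zk1 - Matrix.hadamard (recip β) lk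

/-- One D-LADMM step with parameters (W, θ, β): `Z_{k+1}` minimizes
`f(Z) + (1/2)⟨θ∘(Z−R), Z−R⟩`, `E_{k+1}` minimizes `g(E) + (1/2)⟨β∘(E−S), E−S⟩`,
and `λ_{k+1} = λ_k + β∘(AZ_{k+1}+E_{k+1}−X)`. -/
def DLADMMStep {m d n : ℕ} (f : Matrix (Fin d) (Fin n) ℝ → ℝ)
    (g : Matrix (Fin m) (Fin n) ℝ → ℝ) (A : Matrix (Fin m) (Fin d) ℝ)
    (X : Matrix (Fin m) (Fin n) ℝ) (W : Matrix (Fin m) (Fin d) ℝ)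
    (θ : Matrix (Fin d) (Fin n) ℝ) (β : Matrix (Fin m) (Fin n) ℝ)
    (Zk : Matrix (Fin d) (Fin n) ℝ) (Ek lk : Matrix (Fin m) (Fin n) ℝ)
    (Zk1 : Matrix (Fin d) (Fin n) ℝ) (Ek1 lk1 : Matrix (Fin m) (Fin n) ℝ) : Prop :=
  (∀ Z, f Zk1 + (1/2) * finner (Matrix.hadamard θ (Zk1 - Rmat A X W θ β Zk Ek lk))
        (Zk1 - Rmat A X W θ β Zk Ek lk)
      ≤ f Z + (1/2) * finner (Matrix.hadamard θ (Z - Rmat A X W θ β Zk Ek lk))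
        (Z - Rmat A X W θ β Zk Ek lk)) ∧
  (∀ E, g Ek1 + (1/2) * finner (Matrix.hadamard β (Ek1 - Smat A X β Zk1 lk))
        (Ek1 - Smat A X β Zk1 lk)
      ≤ g E + (1/2) * finner (Matrix.hadamard β (E - Smat A X β Zk1 lk))
        (E - Smat A X β Zk1 lk)) ∧
  lk1 = lk + Matrix.hadamard β (A * Zk1 + Ek1 - X)

/-- The KKT / solution set Ω* (stored as triples ω = (Z, E, −λ)). -/
def OmegaStar {m d n : ℕ} (f : Matrix (Fin d) (Fin n) ℝ → ℝ)
    (g : Matrix (Fin m) (Fin n) ℝ → ℝ) (A : Matrix (Fin m) (Fin d) ℝ)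
    (X : Matrix (Fin m) (Fin n) ℝ) : Set (Triple m d n) :=
  {ω | Aᵀ * ω.2.2 ∈ subdiff f ω.1 ∧ ω.2.2 ∈ subdiff g ω.2.1 ∧ A * ω.1 + ω.2.1 = X}

/-- The parameter set `S(σ, A)`. -/
def Sset {m d n : ℕ} (σ : ℝ) (A : Matrix (Fin m) (Fin d) ℝ) :
    Set (Matrix (Fin m) (Fin d) ℝ × Matrix (Fin d) (Fin n) ℝ × Matrix (Fin m) (Fin n) ℝ) :=
  {p | specNorm (p.1 - A) ≤ σ ∧ EntrywisePos p.2.1 ∧ EntrywisePos p.2.2 ∧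
    ∀ Z : Matrix (Fin d) (Fin n) ℝ, Z ≠ 0 → 0 < finner (Dop A p.1 p.2.1 p.2.2 Z) Z}

/-- `dist²_H(ω, S)` where `H` is built from `(W, θ, β)`. -/
def dist2H {m d n : ℕ} (A W : Matrix (Fin m) (Fin d) ℝ) (θ : Matrix (Fin d) (Fin n) ℝ)
    (β : Matrix (Fin m) (Fin n) ℝ) (ω : Triple m d n) (S : Set (Triple m d n)) : ℝ :=
  sInf {r | ∃ ωs ∈ S, r = tinner (ω - ωs) (Hop A W θ β (ω - ωs))}

/-- Frobenius distance of a triple to a set of triples. -/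
def distF {m d n : ℕ} (ω : Triple m d n) (S : Set (Triple m d n)) : ℝ :=
  sInf {r | ∃ ωs ∈ S, r = tfnorm (ω - ωs)}

/-!
The KKT conditions say that `(Z*, E*)` minimises the Lagrangian
`L(Z, E) = f Z + g E + ⟨λ*, AZ + E − X⟩`, so `f Z + g E − f Z* − g E* + ⟨λ*, AZ + E − X⟩ ≥ 0`.
Because `AZ* + E* = X`, the `F`-pairing at `(Z, E, −λ)` is exactly
`⟨λ, (W − A)(Z − Z*)⟩ + ⟨λ*, AZ + E − X⟩`, and the two facts add up to the bound.
-/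

lemma finner_comm {a b : ℕ} (M N : Matrix (Fin a) (Fin b) ℝ) : finner M N = finner N M := by
  rw [finner, finner, ← Matrix.trace_transpose (Mᵀ * N), Matrix.transpose_mul,
    Matrix.transpose_transpose]

lemma finner_add_right {a b : ℕ} (M N P : Matrix (Fin a) (Fin b) ℝ) :
    finner M (N + P) = finner M N + finner M P := by
  simp [finner, Matrix.mul_add]

lemma finner_sub_right {a b : ℕ} (M N P : Matrix (Fin a) (Fin b) ℝ) :
    finner M (N - P) = finner M N - finner M P := by
  simp [finner, Matrix.mul_sub]

lemma finner_sub_left {a b : ℕ} (M N P : Matrix (Fin a) (Fin b) ℝ) :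
    finner (M - N) P = finner M P - finner N P := by
  simp [finner, Matrix.sub_mul]

lemma finner_neg_left {a b : ℕ} (M N : Matrix (Fin a) (Fin b) ℝ) :
    finner (-M) N = -finner M N := by
  simp [finner]

lemma finner_transpose_mul_left {a b c : ℕ} (A : Matrix (Fin a) (Fin c) ℝ)
    (L : Matrix (Fin a) (Fin b) ℝ) (Y : Matrix (Fin c) (Fin b) ℝ) :
    finner (Aᵀ * L) Y = finner L (A * Y) := by
  rw [finner, finner, Matrix.transpose_mul, Matrix.transpose_transpose, Matrix.mul_assoc]

lemma residual_eq_of_feasible {m d n : ℕ} {A : Matrix (Fin m) (Fin d) ℝ}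
    {X : Matrix (Fin m) (Fin n) ℝ} {Z Zs : Matrix (Fin d) (Fin n) ℝ}
    {E Es : Matrix (Fin m) (Fin n) ℝ} (hX : A * Zs + Es = X) :
    A * Z + E - X = A * (Z - Zs) + (E - Es) := by
  rw [← hX, Matrix.mul_sub]
  abel

lemma le_lagrangian_of_mem_OmegaStar {m d n : ℕ} {f : Matrix (Fin d) (Fin n) ℝ → ℝ}
    {g : Matrix (Fin m) (Fin n) ℝ → ℝ} {A : Matrix (Fin m) (Fin d) ℝ}
    {X : Matrix (Fin m) (Fin n) ℝ} {Zs : Matrix (Fin d) (Fin n) ℝ} {Es ls : Matrix (Fin m) (Fin n) ℝ}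
    (h : (Zs, Es, -ls) ∈ OmegaStar f g A X) (Z : Matrix (Fin d) (Fin n) ℝ)
    (E : Matrix (Fin m) (Fin n) ℝ) :
    f Zs + g Es ≤ f Z + g E + finner ls (A * Z + E - X) := by
  obtain ⟨hfs, hgs, hX⟩ := h
  have hZ : f Zs - finner ls (A * (Z - Zs)) ≤ f Z := by
    simpa [Matrix.mul_neg, finner_neg_left, finner_transpose_mul_left, sub_eq_add_neg]
      using hfs Z
  have hE : g Es - finner ls (E - Es) ≤ g E := by
    simpa [finner_neg_left, sub_eq_add_neg] using hgs E
  rw [residual_eq_of_feasible hX, finner_add_right]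
  linarith

lemma tinner_sub_Fop_of_feasible {m d n : ℕ} (A W : Matrix (Fin m) (Fin d) ℝ)
    (X : Matrix (Fin m) (Fin n) ℝ) (Z Zs : Matrix (Fin d) (Fin n) ℝ)
    (E l Es ls : Matrix (Fin m) (Fin n) ℝ) (hX : A * Zs + Es = X) :
    tinner ((Z, E, -l) - (Zs, Es, -ls)) (Fop A X W (Z, E, -l))
      = finner l ((W - A) * (Z - Zs)) + finner ls (A * Z + E - X) := by
  simp only [tinner, Fop, Prod.fst_sub, Prod.snd_sub, neg_neg, neg_sub_neg]
  rw [finner_comm (Z - Zs), finner_transpose_mul_left, finner_comm (E - Es), residual_eq_of_feasible hX,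
    finner_sub_left, Matrix.sub_mul, finner_sub_right]
  simp only [finner_add_right, finner_sub_right]
  ring

theorem dladmm_F_lower_bound_general {m d n : ℕ}
    (f : Matrix (Fin d) (Fin n) ℝ → ℝ) (g : Matrix (Fin m) (Fin n) ℝ → ℝ)
    (A W : Matrix (Fin m) (Fin d) ℝ) (X : Matrix (Fin m) (Fin n) ℝ)
    (Zk1 : Matrix (Fin d) (Fin n) ℝ) (Ek1 lk1 : Matrix (Fin m) (Fin n) ℝ)
    (Zs : Matrix (Fin d) (Fin n) ℝ) (Es ls : Matrix (Fin m) (Fin n) ℝ)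
    (hKKT : (Zs, Es, -ls) ∈ OmegaStar f g A X) :
    f Zk1 + g Ek1 - f Zs - g Es +
        tinner ((Zk1, Ek1, -lk1) - (Zs, Es, -ls)) (Fop A X W (Zk1, Ek1, -lk1))
      ≥ finner lk1 ((W - A) * (Zk1 - Zs)) := by
  rw [tinner_sub_Fop_of_feasible A W X Zk1 Zs Ek1 lk1 Es ls hKKT.2.2]
  linarith [le_lagrangian_of_mem_OmegaStar hKKT Zk1 Ek1]

/-- lower bound on the objective gap plus the `F_k`-pairing in terms of
`⟨λ_{k+1}, (W_k − A)(Z_{k+1} − Z*)⟩`. -/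
theorem dladmm_F_lower_bound {m d n : ℕ} [NeZero m] [NeZero d] [NeZero n]
    (f : Matrix (Fin d) (Fin n) ℝ → ℝ) (g : Matrix (Fin m) (Fin n) ℝ → ℝ)
    (hf : ConvexOn ℝ Set.univ f) (hg : ConvexOn ℝ Set.univ g)
    (A W : Matrix (Fin m) (Fin d) ℝ) (X : Matrix (Fin m) (Fin n) ℝ)
    (θ : Matrix (Fin d) (Fin n) ℝ) (β : Matrix (Fin m) (Fin n) ℝ)
    (hθ : EntrywisePos θ) (hβ : EntrywisePos β)
    (Zk Zk1 : Matrix (Fin d) (Fin n) ℝ) (Ek Ek1 lk lk1 : Matrix (Fin m) (Fin n) ℝ)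
    (hstep : DLADMMStep f g A X W θ β Zk Ek lk Zk1 Ek1 lk1)
    (Zs : Matrix (Fin d) (Fin n) ℝ) (Es ls : Matrix (Fin m) (Fin n) ℝ)
    (hKKT : (Zs, Es, -ls) ∈ OmegaStar f g A X) :
    f Zk1 + g Ek1 - f Zs - g Es +
        tinner ((Zk1, Ek1, -lk1) - (Zs, Es, -ls)) (Fop A X W (Zk1, Ek1, -lk1))
      ≥ finner lk1 ((W - A) * (Zk1 - Zs)) :=
  dladmm_F_lower_bound_general f g A W X Zk1 Ek1 lk1 Zs Es ls hKKT

end
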